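/- For every natural number n, R_n(t) = ∑_{k=0}^{n} binomial(n,k)·Q_k(t)·Q_{n−k}(t) as an identity of polynomials in t; equivalently, the exponential generating function of (R_n) is the square of that of (Q_n). -/
import Mathlib


open Polynomial

/-- The derivative polynomials `Q_n^{(a)}`:
`Q_0^{(a)} = 1`, `Q_{n+1}^{(a)} = (1+t²)·(Q_n^{(a)})' + a·t·Q_n^{(a)}`;
`Q_n = Q_n^{(1)}` and `R_n = Q_n^{(2)}`. -/
noncomputable def polyQ (a : ℝ) : ℕ → Polynomial ℝ
  | 0 => 1
  | n + 1 => (1 + X ^ 2) * derivative (polyQ a n) + C a * X * polyQ a n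

theorem stmt14 (n : ℕ) :
    polyQ 2 n = ∑ k ∈ Finset.range (n + 1),
      (n.choose k : Polynomial ℝ) * (polyQ 1 k * polyQ 1 (n - k)) := by
  induction n with
  | zero => simp [polyQ]
  | succ n ih =>
    have h1 : polyQ 2 (n+1) = (1+X^2) * derivative (polyQ 2 n) + C 2 * X * polyQ 2 n := rfl
    rw [h1, ih, map_sum, Finset.mul_sum, Finset.mul_sum, ← Finset.sum_add_distrib]
    have step : ∀ k ∈ Finset.range (n+1),
        (1+X^2) * derivative ((n.choose k : Polynomial ℝ) * (polyQ 1 k * polyQ 1 (n-k)))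
          + C 2 * X * ((n.choose k : Polynomial ℝ) * (polyQ 1 k * polyQ 1 (n-k)))
        = (n.choose k : Polynomial ℝ) * (polyQ 1 (k+1) * polyQ 1 (n-k))
          + (n.choose k : Polynomial ℝ) * (polyQ 1 k * polyQ 1 (n-k+1)) := by
      intro k hk
      have hk1 : polyQ 1 (k+1) = (1+X^2) * derivative (polyQ 1 k) + C 1 * X * polyQ 1 k := rfl
      have hk2 : polyQ 1 (n-k+1)
          = (1+X^2) * derivative (polyQ 1 (n-k)) + C 1 * X * polyQ 1 (n-k) := rfl
      rw [hk1, hk2, derivative_mul, derivative_mul, Polynomial.derivative_natCast]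
      simp only [map_one, map_ofNat]
      ring
    rw [Finset.sum_congr rfl step, Finset.sum_add_distrib]
    -- now handle the RHS
    rw [Finset.sum_range_succ' (fun k => ((n+1).choose k : Polynomial ℝ)
        * (polyQ 1 k * polyQ 1 (n+1-k)))]
    have pascal : ∀ k ∈ Finset.range (n+1),
        (((n+1).choose (k+1) : Polynomial ℝ)) * (polyQ 1 (k+1) * polyQ 1 (n+1-(k+1)))
        = (n.choose k : Polynomial ℝ) * (polyQ 1 (k+1) * polyQ 1 (n-k))
          + (n.choose (k+1) : Polynomial ℝ) * (polyQ 1 (k+1) * polyQ 1 (n-k)) := by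
      intro k hk
      have : n+1-(k+1) = n-k := by omega
      rw [this, Nat.choose_succ_succ]
      push_cast
      ring
    rw [Finset.sum_congr rfl pascal, Finset.sum_add_distrib]
    have hB : ∑ k ∈ Finset.range (n+1),
        (n.choose k : Polynomial ℝ) * (polyQ 1 k * polyQ 1 (n-k+1))
        = (∑ k ∈ Finset.range (n+1),
            (n.choose (k+1) : Polynomial ℝ) * (polyQ 1 (k+1) * polyQ 1 (n-k)))
          + ((n+1).choose 0 : Polynomial ℝ) * (polyQ 1 0 * polyQ 1 (n+1-0)) := by
      rw [Finset.sum_range_succ' (fun k => (n.choose k : Polynomial ℝ)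
          * (polyQ 1 k * polyQ 1 (n-k+1)))]
      rw [Finset.sum_range_succ (fun k => (n.choose (k+1) : Polynomial ℝ)
          * (polyQ 1 (k+1) * polyQ 1 (n-k)))]
      rw [Nat.choose_succ_self]
      have e : ∀ k ∈ Finset.range n,
          (n.choose (k+1) : Polynomial ℝ) * (polyQ 1 (k+1) * polyQ 1 (n-(k+1)+1))
          = (n.choose (k+1) : Polynomial ℝ) * (polyQ 1 (k+1) * polyQ 1 (n-k)) := by
        intro k hk
        simp only [Finset.mem_range] at hk
        have : n - (k+1) + 1 = n - k := by omega
        rw [this]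
      rw [Finset.sum_congr rfl e]
      have q0 : polyQ 1 0 = 1 := rfl
      simp [q0]
    rw [hB]
    ring
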